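/- arXiv:1804.02394 — 4 statements merged into one kernel-verified Lean document; each statement's English description precedes it below -/
import Mathlib

section
/- Mirror descent step inequality: let d be 1-strongly convex w.r.t. ‖·‖_p with Bregman divergence V, let g in R^n, gamma > 0, and let z_+ = argmin_{v} { gamma ⟨g, v - z⟩ + V[z](v) }. Then for every u in R^n, gamma ⟨g, z - u⟩ <= (gamma^2/2)‖g‖_q^2 + V[z](u) - V[z_+](u). -/
/-!
Write `h = z - z₊` and `B(x, y) = d y - d x - ⟪∇d x, y - x⟫`. The three-point identity of Bregman
divergences reduces the claim to `B(z₊, z) ≤ γ²/2 ‖g‖_q²`, where optimality of `z₊` gives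
`∇d z - ∇d z₊ = γ g`. Since `‖·‖_p` need not be symmetric, strong convexity at the pair `(z₊, z)`
alone does not suffice. Instead, the mean value theorem applied to the slope `(φ 1 - φ θ) / (1 - θ)`
of `φ θ = d (z₊ + θ h)` yields a point `x_θ` of the segment with `B(x_θ, z) = B(z, z₊) (1 - θ)²`.
Strong convexity at `(x_θ, z)` and duality then give `(B(z₊, z) + B(z, z₊))² ≤ 2 γ² ‖g‖_q² B(z, z₊)`,
and AM-GM finishes the proof.
-/

open Set Filter Topology
open scoped InnerProductSpace

theorem exists_sub_sub_mul_eq_mul_sq {φ φ' : ℝ → ℝ} (hφ : ∀ t, HasDerivAt φ (φ' t) t) :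
    ∃ θ ∈ Ioo (0 : ℝ) 1,
      φ 1 - φ θ - (1 - θ) * φ' θ = (φ' 1 - (φ 1 - φ 0)) * (1 - θ) ^ 2 := by
  have hslope : ∀ θ ≠ (1 : ℝ),
      HasDerivAt (dslope φ 1) ((φ 1 - φ θ - (1 - θ) * φ' θ) / (1 - θ) ^ 2) θ := by
    intro θ hθ
    have hsub : θ - 1 ≠ 0 := sub_ne_zero.2 hθ
    have h := (((hasDerivAt_id θ).sub_const 1).inv hsub).mul ((hφ θ).sub_const (φ 1))
    refine (h.congr_deriv ?_).congr_of_eventuallyEq ?_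
    · have : 1 - θ ≠ 0 := sub_ne_zero.2 hθ.symm
      simp only [id, Pi.inv_apply]
      field_simp
      ring
    · filter_upwards [eventually_ne_nhds hθ] with t ht
      rw [dslope_of_ne _ ht, slope_def_field, div_eq_inv_mul]
      rfl
  have hcont : ContinuousOn (dslope φ 1) (Icc 0 1) := by
    intro t _
    rcases eq_or_ne t 1 with rfl | ht
    · exact (continuousAt_dslope_same.2 (hφ 1).differentiableAt).continuousWithinAt
    · exact (hslope t ht).continuousAt.continuousWithinAt
  obtain ⟨θ, hθ, hderiv⟩ := exists_hasDerivAt_eq_slope (dslope φ 1) _ zero_lt_one hcont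
    fun t ht => hslope t ht.2.ne
  refine ⟨θ, hθ, ?_⟩
  rw [dslope_same, (hφ 1).deriv, dslope_of_ne _ zero_ne_one, slope_def_field] at hderiv
  have : 1 - θ ≠ 0 := sub_ne_zero.2 hθ.2.ne'
  field_simp at hderiv
  linarith

theorem eq_zero_of_forall_inner_sub_nonneg {E : Type*} [NormedAddCommGroup E]
    [InnerProductSpace ℝ E] {w x : E} (h : ∀ u, 0 ≤ ⟪w, u - x⟫_ℝ) : w = 0 := by
  have := h (x - w)
  rw [sub_sub_cancel_left, inner_neg_right] at this
  exact real_inner_self_nonpos.1 (by linarith)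

section Bregman

variable {E : Type*} [NormedAddCommGroup E] [InnerProductSpace ℝ E]

def bregmanDiv (d : E → ℝ) (Dd : E → E) (x y : E) : ℝ := d y - d x - ⟪Dd x, y - x⟫_ℝ

variable {d : E → ℝ} {Dd : E → E}

theorem bregmanDiv_add_bregmanDiv_swap (x y : E) :
    bregmanDiv d Dd x y + bregmanDiv d Dd y x = ⟪Dd y - Dd x, y - x⟫_ℝ := by
  simp only [bregmanDiv, inner_sub_left, inner_sub_right]
  ring

theorem bregmanDiv_three_point (x y u : E) :
    bregmanDiv d Dd x u = bregmanDiv d Dd y u + bregmanDiv d Dd x y + ⟪Dd y - Dd x, u - y⟫_ℝ := by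
  simp only [bregmanDiv, inner_sub_left, inner_sub_right]
  ring

variable [CompleteSpace E]

theorem exists_bregmanDiv_segment_eq (hgrad : ∀ x, HasGradientAt d (Dd x) x) (x y : E) :
    ∃ θ ∈ Ioo (0 : ℝ) 1,
      bregmanDiv d Dd (x + θ • (y - x)) y = bregmanDiv d Dd y x * (1 - θ) ^ 2 := by
  have hline : ∀ t : ℝ, HasDerivAt (fun s : ℝ => d (x + s • (y - x)))
      ⟪Dd (x + t • (y - x)), y - x⟫_ℝ t := fun t =>
    (hgrad _).hasFDerivAt.comp_hasDerivAt t
      (((hasDerivAt_id t).smul_const (y - x)).const_add x |>.congr_deriv (one_smul ℝ _))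
  obtain ⟨θ, hθ, heq⟩ := exists_sub_sub_mul_eq_mul_sq hline
  refine ⟨θ, hθ, ?_⟩
  have hrest : y - (x + θ • (y - x)) = (1 - θ) • (y - x) := by module
  simp only [zero_smul, add_zero, one_smul, add_sub_cancel] at heq
  rw [bregmanDiv, bregmanDiv, hrest, real_inner_smul_right, heq, ← neg_sub y x, inner_neg_right]
  ring

theorem bregmanDiv_le_sq_div_two {Np : E → ℝ} (hgrad : ∀ x, HasGradientAt d (Dd x) x)
    (hsc : ∀ x y, 1 / 2 * Np (y - x) ^ 2 ≤ bregmanDiv d Dd x y) {x y : E} {c : ℝ}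
    (hdual : ∀ w, ⟪Dd y - Dd x, w⟫_ℝ ≤ c * Np w) :
    bregmanDiv d Dd x y ≤ c ^ 2 / 2 := by
  set T := bregmanDiv d Dd x y
  set μ := bregmanDiv d Dd y x
  have hT : 0 ≤ T := le_trans (by positivity) (hsc x y)
  have hμ : 0 ≤ μ := le_trans (by positivity) (hsc y x)
  obtain ⟨θ, hθ, hsegment⟩ := exists_bregmanDiv_segment_eq hgrad x y
  set w := (1 - θ) • (y - x)
  have hθ' : 0 < 1 - θ := sub_pos.2 hθ.2
  have hnorm : 1 / 2 * Np w ^ 2 ≤ μ * (1 - θ) ^ 2 := by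
    have hrest : y - (x + θ • (y - x)) = w := by module
    simpa only [hrest, hsegment] using hsc (x + θ • (y - x)) y
  have hpair : (1 - θ) * (T + μ) ≤ c * Np w := by
    rw [bregmanDiv_add_bregmanDiv_swap, ← real_inner_smul_right]
    exact hdual w
  have hsq : ((1 - θ) * (T + μ)) ^ 2 ≤ (1 - θ) ^ 2 * (2 * c ^ 2 * μ) := by
    calc ((1 - θ) * (T + μ)) ^ 2 ≤ (c * Np w) ^ 2 := pow_le_pow_left₀ (by positivity) hpair 2
      _ = c ^ 2 * (2 * (1 / 2 * Np w ^ 2)) := by ring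
      _ ≤ c ^ 2 * (2 * (μ * (1 - θ) ^ 2)) := by gcongr
      _ = (1 - θ) ^ 2 * (2 * c ^ 2 * μ) := by ring
  have hsum : (T + μ) ^ 2 ≤ 2 * c ^ 2 * μ := by
    rw [mul_pow] at hsq
    exact le_of_mul_le_mul_left hsq (by positivity)
  have hamgm : T * μ ≤ c ^ 2 / 2 * μ := by nlinarith [sq_nonneg (T - μ)]
  rcases hμ.eq_or_lt with hμ0 | hμpos
  · rw [← hμ0, add_zero, mul_zero] at hsum
    nlinarith
  · exact le_of_mul_le_mul_right hamgm hμpos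

end Bregman

theorem mirror_descent_step_general (n : ℕ)
    (d : EuclideanSpace ℝ (Fin n) → ℝ) (Dd : EuclideanSpace ℝ (Fin n) → EuclideanSpace ℝ (Fin n))
    (hgrad : ∀ x, HasGradientAt d (Dd x) x)
    (Np Nq : EuclideanSpace ℝ (Fin n) → ℝ)
    (hdual : ∀ s x, (inner ℝ s x : ℝ) ≤ Nq s * Np x)
    (hsc : ∀ x y, d y - d x - (inner ℝ (Dd x) (y - x) : ℝ) ≥ 1 / 2 * Np (y - x) ^ 2)
    (V : EuclideanSpace ℝ (Fin n) → EuclideanSpace ℝ (Fin n) → ℝ)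
    (hV : ∀ z x, V z x = d x - d z - (inner ℝ (Dd z) (x - z) : ℝ))
    (g z zp : EuclideanSpace ℝ (Fin n)) (gamma : ℝ) (hgamma : 0 < gamma)
    (hopt : ∀ u, (inner ℝ ((Dd zp - Dd z) + gamma • g) (u - zp) : ℝ) ≥ 0)
    (u : EuclideanSpace ℝ (Fin n)) :
    gamma * (inner ℝ g (z - u) : ℝ) ≤ gamma ^ 2 / 2 * Nq g ^ 2 + V z u - V zp u := by
  have hstep : Dd zp - Dd z = -(gamma • g) :=
    eq_neg_of_add_eq_zero_left (eq_zero_of_forall_inner_sub_nonneg hopt)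
  have hkey : bregmanDiv d Dd zp z ≤ (gamma * Nq g) ^ 2 / 2 := by
    refine bregmanDiv_le_sq_div_two hgrad hsc fun w => ?_
    rw [← neg_sub, hstep, neg_neg, real_inner_smul_left, mul_assoc]
    exact mul_le_mul_of_nonneg_left (hdual g w) hgamma.le
  have hVB : V = bregmanDiv d Dd := funext₂ hV
  have hswap := bregmanDiv_add_bregmanDiv_swap (d := d) (Dd := Dd) z zp
  rw [hVB, bregmanDiv_three_point z zp u]
  rw [hstep, inner_neg_left, real_inner_smul_left] at hswap ⊢
  simp only [inner_sub_right] at hswap ⊢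
  linarith

/-- Mirror descent step inequality. `d` is differentiable with gradient map `Dd` and 1-strongly
convex w.r.t. the norm `Np`, whose dual norm is `Nq`; `V` is the Bregman divergence of `d`;
`zp` is the minimizer of `v ↦ gamma ⟨g, v - z⟩ + V[z](v)`, characterized by its first-order
optimality condition. Then `gamma ⟨g, z - u⟩ ≤ gamma²/2 ‖g‖_q² + V[z](u) - V[z₊](u)`. -/
theorem mirror_descent_step (n : ℕ)
    (d : EuclideanSpace ℝ (Fin n) → ℝ) (Dd : EuclideanSpace ℝ (Fin n) → EuclideanSpace ℝ (Fin n))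
    (hgrad : ∀ x, HasGradientAt d (Dd x) x)
    (Np Nq : EuclideanSpace ℝ (Fin n) → ℝ)
    (hNq_nonneg : ∀ g, 0 ≤ Nq g)
    (hdual : ∀ s x, (inner ℝ s x : ℝ) ≤ Nq s * Np x)
    (hsc : ∀ x y, d y - d x - (inner ℝ (Dd x) (y - x) : ℝ) ≥ 1 / 2 * Np (y - x) ^ 2)
    (V : EuclideanSpace ℝ (Fin n) → EuclideanSpace ℝ (Fin n) → ℝ)
    (hV : ∀ z x, V z x = d x - d z - (inner ℝ (Dd z) (x - z) : ℝ))
    (g z zp : EuclideanSpace ℝ (Fin n)) (gamma : ℝ) (hgamma : 0 < gamma)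
    (hopt : ∀ u, (inner ℝ ((Dd zp - Dd z) + gamma • g) (u - zp) : ℝ) ≥ 0)
    (u : EuclideanSpace ℝ (Fin n)) :
    gamma * (inner ℝ g (z - u) : ℝ) ≤ gamma ^ 2 / 2 * Nq g ^ 2 + V z u - V zp u :=
  mirror_descent_step_general n d Dd hgrad Np Nq hdual hsc V hV g z zp gamma hgamma hopt u
end

section
/- Gradient step progress for a directional estimate: let f: R^n → R be convex with L_2-Lipschitz gradient (w.r.t. the Euclidean norm), let e be a unit vector, let g̃ in R^n be any vector collinear with e, and set y = x - (1/(2 L_2)) g̃. Then f(y) <= f(x) + ⟨g̃, y - x⟩ + L_2 ‖y - x‖_2^2 + (1/(2 L_2))·‖⟨∇f(x), e⟩ e - g̃‖_2^2, and consequently (1/(4 L_2))‖g̃‖_2^2 <= f(x) - f(y) + (1/(2 L_2))‖⟨∇f(x), e⟩ e - g̃‖_2^2. -/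
/-!
Along the segment from `x` to `y = x + v`, the function
`t ↦ f (x + t • v) - t * ⟪∇f x, v⟫ - L / 2 * t ^ 2 * ‖v‖ ^ 2` has nonpositive derivative for
`t ≥ 0` by the Lipschitz bound, which gives the descent lemma
`f y ≤ f x + ⟪∇f x, y - x⟫ + L / 2 * ‖y - x‖ ^ 2`. Since `y - x` is a multiple of `e`, `∇f x` may
be replaced there by its projection `⟪∇f x, e⟫ • e`; splitting that as `g̃` plus an error and
bounding the error term by Young's inequality gives the first claim. Substituting
`y - x = -g̃ / (2 L)` turns `⟪g̃, y - x⟫ + L * ‖y - x‖ ^ 2` into `-‖g̃‖ ^ 2 / (4 L)`.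
-/

open RealInnerProductSpace Set

section

variable {F : Type*} [NormedAddCommGroup F] [InnerProductSpace ℝ F]

theorem real_inner_le_half_mul_norm_sq_add (u v : F) {L : ℝ} (hL : 0 < L) :
    ⟪u, v⟫ ≤ L / 2 * ‖v‖ ^ 2 + 1 / (2 * L) * ‖u‖ ^ 2 := by
  have hsq : 0 ≤ L ^ 2 * ‖v‖ ^ 2 - 2 * L * ⟪u, v⟫ + ‖u‖ ^ 2 := by
    have hexpand := norm_sub_sq_real (L • v) u
    rw [norm_smul, mul_pow, real_inner_smul_left, real_inner_comm,
      Real.norm_of_nonneg hL.le] at hexpand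
    linarith [sq_nonneg ‖L • v - u‖]
  have hrhs : L / 2 * ‖v‖ ^ 2 + 1 / (2 * L) * ‖u‖ ^ 2
      = (L ^ 2 * ‖v‖ ^ 2 + ‖u‖ ^ 2) / (2 * L) := by
    field_simp
  rw [hrhs, le_div_iff₀ (by positivity)]
  linarith

theorem real_inner_smul_right_eq_of_norm_eq_one {e : F} (he : ‖e‖ = 1) (a : F) (t : ℝ) :
    ⟪a, t • e⟫ = ⟪⟪a, e⟫ • e, t • e⟫ := by
  rw [real_inner_smul_right, real_inner_smul_right, real_inner_smul_left,
    real_inner_self_eq_norm_sq, he]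
  ring

variable [CompleteSpace F]

theorem HasGradientAt.hasDerivAt_comp_add_smul {f : F → ℝ} {g x v : F} {t : ℝ}
    (hf : HasGradientAt f g (x + t • v)) :
    HasDerivAt (fun s : ℝ => f (x + s • v)) ⟪g, v⟫ t := by
  have hline : HasDerivAt (fun s : ℝ => x + s • v) v t := by
    simpa using ((hasDerivAt_id t).smul_const v).const_add x
  simpa [Function.comp_def] using hf.hasFDerivAt.comp_hasDerivAt t hline

theorem le_add_inner_add_mul_norm_sq_of_lipschitz_gradient {f : F → ℝ} {f' : F → F}
    (hgrad : ∀ x, HasGradientAt f (f' x) x) {L : ℝ}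
    (hlip : ∀ x y, ‖f' x - f' y‖ ≤ L * ‖x - y‖) (x y : F) :
    f y ≤ f x + ⟪f' x, y - x⟫ + L / 2 * ‖y - x‖ ^ 2 := by
  set v := y - x
  let φ : ℝ → ℝ := fun t => f (x + t • v) - t * ⟪f' x, v⟫ - L / 2 * t ^ 2 * ‖v‖ ^ 2
  have hφ : ∀ t, HasDerivAt φ (⟪f' (x + t • v), v⟫ - ⟪f' x, v⟫ - L * t * ‖v‖ ^ 2) t := by
    intro t
    have hderiv := (((hgrad (x + t • v)).hasDerivAt_comp_add_smul).sub
      ((hasDerivAt_id t).mul_const ⟪f' x, v⟫)).sub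
      (((hasDerivAt_pow 2 t).const_mul (L / 2)).mul_const (‖v‖ ^ 2))
    exact hderiv.congr_deriv (by push_cast; ring)
  have hφ'_nonpos : ∀ t ∈ interior (Ici (0 : ℝ)),
      ⟪f' (x + t • v), v⟫ - ⟪f' x, v⟫ - L * t * ‖v‖ ^ 2 ≤ 0 := by
    intro t ht
    rw [interior_Ici, mem_Ioi] at ht
    have hlip_t : ‖f' (x + t • v) - f' x‖ ≤ L * (t * ‖v‖) := by
      simpa [norm_smul, abs_of_pos ht] using hlip (x + t • v) x
    rw [sub_nonpos]
    calc ⟪f' (x + t • v), v⟫ - ⟪f' x, v⟫ = ⟪f' (x + t • v) - f' x, v⟫ :=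
          (inner_sub_left _ _ _).symm
      _ ≤ ‖f' (x + t • v) - f' x‖ * ‖v‖ := real_inner_le_norm _ _
      _ ≤ L * (t * ‖v‖) * ‖v‖ := by gcongr
      _ = L * t * ‖v‖ ^ 2 := by ring
  have hanti : AntitoneOn φ (Ici 0) :=
    antitoneOn_of_hasDerivWithinAt_nonpos (convex_Ici 0)
      (fun t _ => (hφ t).continuousAt.continuousWithinAt)
      (fun t _ => (hφ t).hasDerivWithinAt) hφ'_nonpos
  have hφ_one_le := hanti (mem_Ici.2 le_rfl) (mem_Ici.2 zero_le_one) zero_le_one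
  simp only [φ, v, one_smul, zero_smul, add_zero, add_sub_cancel, one_mul, zero_mul, one_pow,
    ne_eq, OfNat.ofNat_ne_zero, not_false_eq_true, zero_pow, mul_zero, sub_zero] at hφ_one_le
  linarith

theorem le_add_inner_add_mul_norm_sq_add_norm_sub_sq {f : F → ℝ} {f' : F → F}
    (hgrad : ∀ x, HasGradientAt f (f' x) x) {L : ℝ} (hL : 0 < L)
    (hlip : ∀ x y, ‖f' x - f' y‖ ≤ L * ‖x - y‖) {x y p : F} (g : F)
    (hp : ⟪f' x, y - x⟫ = ⟪p, y - x⟫) :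
    f y ≤ f x + ⟪g, y - x⟫ + L * ‖y - x‖ ^ 2 + 1 / (2 * L) * ‖p - g‖ ^ 2 := by
  have hdescent := le_add_inner_add_mul_norm_sq_of_lipschitz_gradient hgrad hlip x y
  have hsplit : ⟪f' x, y - x⟫ = ⟪g, y - x⟫ + ⟪p - g, y - x⟫ := by
    rw [hp, inner_sub_left]; ring
  have hyoung := real_inner_le_half_mul_norm_sq_add (p - g) (y - x) hL
  linarith

end

theorem gradient_step_progress_general (n : ℕ)
    (f : EuclideanSpace ℝ (Fin n) → ℝ)
    (f' : EuclideanSpace ℝ (Fin n) → EuclideanSpace ℝ (Fin n))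
    (hgrad : ∀ x, HasGradientAt f (f' x) x)
    (L : ℝ) (hL : 0 < L)
    (hlip : ∀ x y, ‖f' x - f' y‖ ≤ L * ‖x - y‖)
    (e : EuclideanSpace ℝ (Fin n)) (he : ‖e‖ = 1)
    (c : ℝ) (gt : EuclideanSpace ℝ (Fin n)) (hgt : gt = c • e)
    (x y : EuclideanSpace ℝ (Fin n)) (hy : y = x - (1 / (2 * L)) • gt) :
    f y ≤ f x + (inner ℝ gt (y - x) : ℝ) + L * ‖y - x‖ ^ 2 +
        1 / (2 * L) * ‖((inner ℝ (f' x) e : ℝ)) • e - gt‖ ^ 2 ∧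
      1 / (4 * L) * ‖gt‖ ^ 2 ≤ f x - f y +
        1 / (2 * L) * ‖((inner ℝ (f' x) e : ℝ)) • e - gt‖ ^ 2 := by
  have hstep : y - x = (-(1 / (2 * L))) • gt := by
    rw [hy, neg_smul]; abel
  have hprogress := le_add_inner_add_mul_norm_sq_add_norm_sub_sq hgrad hL hlip gt
    (p := ⟪f' x, e⟫ • e) (by
      rw [hstep, hgt, smul_smul]; exact real_inner_smul_right_eq_of_norm_eq_one he _ _)
  refine ⟨hprogress, ?_⟩
  have hinner : ⟪gt, y - x⟫ = -(1 / (2 * L)) * ‖gt‖ ^ 2 := by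
    rw [hstep, real_inner_smul_right, real_inner_self_eq_norm_sq]
  have hnorm : ‖y - x‖ ^ 2 = (1 / (2 * L)) ^ 2 * ‖gt‖ ^ 2 := by
    rw [hstep, norm_smul, norm_neg, Real.norm_of_nonneg (by positivity)]
    ring
  have hquad : -(1 / (2 * L)) * ‖gt‖ ^ 2 + L * ((1 / (2 * L)) ^ 2 * ‖gt‖ ^ 2)
      = -(1 / (4 * L) * ‖gt‖ ^ 2) := by
    field_simp; ring
  rw [hinner, hnorm] at hprogress
  linarith

/-- Gradient step progress for a directional estimate: `f` is convex with `L₂`-Lipschitz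
gradient `f'`, `e` is a unit vector, `g̃ = c • e`, and `y = x - g̃/(2 L₂)`. -/
theorem gradient_step_progress (n : ℕ)
    (f : EuclideanSpace ℝ (Fin n) → ℝ)
    (f' : EuclideanSpace ℝ (Fin n) → EuclideanSpace ℝ (Fin n))
    (hgrad : ∀ x, HasGradientAt f (f' x) x)
    (hconv : ConvexOn ℝ Set.univ f)
    (L : ℝ) (hL : 0 < L)
    (hlip : ∀ x y, ‖f' x - f' y‖ ≤ L * ‖x - y‖)
    (e : EuclideanSpace ℝ (Fin n)) (he : ‖e‖ = 1)
    (c : ℝ) (gt : EuclideanSpace ℝ (Fin n)) (hgt : gt = c • e)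
    (x y : EuclideanSpace ℝ (Fin n)) (hy : y = x - (1 / (2 * L)) • gt) :
    f y ≤ f x + (inner ℝ gt (y - x) : ℝ) + L * ‖y - x‖ ^ 2 +
        1 / (2 * L) * ‖((inner ℝ (f' x) e : ℝ)) • e - gt‖ ^ 2 ∧
      1 / (4 * L) * ‖gt‖ ^ 2 ≤ f x - f y +
        1 / (2 * L) * ‖((inner ℝ (f' x) e : ℝ)) • e - gt‖ ^ 2 :=
  gradient_step_progress_general n f f' hgrad L hL hlip e he c gt hgt x y hy
end

section
/- Technical induction lemma (accelerated case): let M > 0, let alpha_{k+1} = (k+2)/(96 M) for k >= 0, and let a_0, ..., a_{N-1}, b, R_1, ..., R_{N-1} be nonnegative reals such that R_l <= sqrt(2)·sqrt( sum_{k=0}^{l-1} a_k + b·sum_{k=1}^{l-1} alpha_{k+1} R_k ) for l = 1, ..., N. Then for every l = 1, ..., N: sum_{k=0}^{l-1} a_k + b·sum_{k=1}^{l-1} alpha_{k+1} R_k <= ( sqrt( sum_{k=0}^{l-1} a_k ) + sqrt(2)·b·l^2/(96 M) )^2. -/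
set_option maxHeartbeats 1000000


/-- Technical induction lemma (accelerated case), with step sizes
`α_{k+1} = (k+2)/(96 M)`. Empty sums are zero. -/
theorem technical_lemma_accelerated (M : ℝ) (hM : 0 < M) (N : ℕ)
    (a R : ℕ → ℝ) (b : ℝ)
    (ha : ∀ k, 0 ≤ a k) (hb : 0 ≤ b) (hR : ∀ k, 0 ≤ R k)
    (hrec : ∀ l, 1 ≤ l → l ≤ N →
      R l ≤ Real.sqrt 2 * Real.sqrt (∑ k ∈ Finset.range l, a k +
        b * ∑ k ∈ Finset.Ico 1 l, ((k : ℝ) + 2) / (96 * M) * R k)) :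
    ∀ l, 1 ≤ l → l ≤ N →
      ∑ k ∈ Finset.range l, a k + b * ∑ k ∈ Finset.Ico 1 l, ((k : ℝ) + 2) / (96 * M) * R k
        ≤ (Real.sqrt (∑ k ∈ Finset.range l, a k) +
            Real.sqrt 2 * b * (l : ℝ) ^ 2 / (96 * M)) ^ 2 := by
  intro l hl
  induction l, hl using Nat.le_induction with
  | base =>
    intro _
    simp only [Finset.range_one, Finset.sum_singleton, Finset.Ico_self, Finset.sum_empty,
      mul_zero, add_zero]
    have h0 : Real.sqrt (a 0) ^ 2 = a 0 := Real.sq_sqrt (ha 0)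
    have h1 : 0 ≤ Real.sqrt 2 * b * ((1 : ℕ) : ℝ) ^ 2 / (96 * M) := by positivity
    nlinarith [Real.sqrt_nonneg (a 0)]
  | succ l hl IH =>
    intro hlN
    have hlN' : l ≤ N := le_trans (Nat.le_succ l) hlN
    have IH' := IH hlN'
    have hRl := hrec l hl hlN'
    have hM96 : (0:ℝ) < 96 * M := by linarith
    set A := ∑ k ∈ Finset.range l, a k with hA
    set T := ∑ k ∈ Finset.Ico 1 l, ((k : ℝ) + 2) / (96 * M) * R k with hT
    have hA0 : 0 ≤ A := Finset.sum_nonneg fun k _ => ha k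
    have hT0 : 0 ≤ T := Finset.sum_nonneg fun k _ =>
      mul_nonneg (div_nonneg (by positivity) (le_of_lt hM96)) (hR k)
    rw [Finset.sum_range_succ, Finset.sum_Ico_succ_top hl, ← hA, ← hT]
    have hsq : Real.sqrt (A + b * T) ≤ Real.sqrt A + Real.sqrt 2 * b * (l:ℝ)^2 / (96*M) := by
      have h := Real.sqrt_le_sqrt IH'
      rwa [Real.sqrt_sq (by positivity)] at h
    have hR' : R l ≤ Real.sqrt 2 * (Real.sqrt A + Real.sqrt 2 * b * (l:ℝ)^2 / (96*M)) :=
      hRl.trans (mul_le_mul_of_nonneg_left hsq (Real.sqrt_nonneg 2))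
    have s2 : Real.sqrt 2 * Real.sqrt 2 = 2 := Real.mul_self_sqrt (by norm_num)
    have sA : Real.sqrt A * Real.sqrt A = A := Real.mul_self_sqrt hA0
    have sA' : Real.sqrt (A + a l) * Real.sqrt (A + a l) = A + a l :=
      Real.mul_self_sqrt (by linarith [ha l])
    have hmono : Real.sqrt A ≤ Real.sqrt (A + a l) := Real.sqrt_le_sqrt (by linarith [ha l])
    push_cast
    set x : ℝ := (l : ℝ) with hx
    have hx1 : (1:ℝ) ≤ x := by rw [hx]; exact_mod_cast hl
    set u : ℝ := (96 * M)⁻¹ with hu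
    have hu0 : 0 < u := by positivity
    simp only [div_eq_mul_inv, ← hu] at IH' hR' hsq ⊢
    set sa := Real.sqrt A with hsa
    set sa' := Real.sqrt (A + a l) with hsa'
    set s := Real.sqrt 2 with hs
    have hs0 : 0 ≤ s := Real.sqrt_nonneg 2
    have hsa0 : 0 ≤ sa := Real.sqrt_nonneg A
    have hsa'0 : 0 ≤ sa' := Real.sqrt_nonneg _
    clear_value A T x u sa sa' s
    have h7 : b * ((x + 2) * u) * R l ≤ s * b * (x+2) * u * sa + 2 * b^2 * (x+2) * x^2 * u^2 := by
      calc b * ((x + 2) * u) * R l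
          ≤ b * ((x + 2) * u) * (s * (sa + s * b * x ^ 2 * u)) :=
            mul_le_mul_of_nonneg_left hR' (by positivity)
        _ = s * b * (x+2) * u * sa + (s * s) * b^2 * (x+2) * x^2 * u^2 := by ring
        _ = s * b * (x+2) * u * sa + 2 * b^2 * (x+2) * x^2 * u^2 := by rw [s2]
    have IH2 : A + b * T ≤ A + 2 * s * b * x^2 * u * sa + 2 * b^2 * x^4 * u^2 := by
      calc A + b * T ≤ (sa + s * b * x ^ 2 * u) ^ 2 := IH'
        _ = sa * sa + 2 * s * b * x^2 * u * sa + (s * s) * b^2 * x^4 * u^2 := by ring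
        _ = A + 2 * s * b * x^2 * u * sa + 2 * b^2 * x^4 * u^2 := by rw [sA, s2]
    have e1 : sa * (2*x^2 + x + 2) ≤ sa' * (2*(x+1)^2) :=
      mul_le_mul hmono (by nlinarith) (by nlinarith) hsa'0
    have e2 : x^4 + x^3 + 2*x^2 ≤ (x+1)^4 := by nlinarith
    have hp1 : s * b * u * (sa * (2*x^2 + x + 2)) ≤ s * b * u * (sa' * (2*(x+1)^2)) :=
      mul_le_mul_of_nonneg_left e1 (by positivity)
    have hp2 : 2 * b^2 * u^2 * (x^4 + x^3 + 2*x^2) ≤ 2 * b^2 * u^2 * (x+1)^4 :=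
      mul_le_mul_of_nonneg_left e2 (by positivity)
    have hrhs : (sa' + s * b * (x+1) ^ 2 * u) ^ 2
        = (A + a l) + 2 * s * b * (x+1)^2 * u * sa' + 2 * b^2 * (x+1)^4 * u^2 := by
      rw [show (sa' + s * b * (x+1) ^ 2 * u) ^ 2
          = sa' * sa' + 2 * s * b * (x+1)^2 * u * sa' + (s * s) * b^2 * (x+1)^4 * u^2 from by ring,
        sA', s2]
    rw [hrhs]
    linarith [IH2, h7, hp1, hp2]
end

section
/- Technical induction lemma (non-accelerated case): let alpha > 0 and let a_0, ..., a_{N-1}, b, R_1, ..., R_{N-1} be nonnegative reals such that R_l <= sqrt(2)·sqrt( sum_{k=0}^{l-1} a_k + b·alpha·sum_{k=1}^{l-1} R_k ) for l = 1, ..., N. Then for every l = 1, ..., N: sum_{k=0}^{l-1} a_k + b·alpha·sum_{k=1}^{l-1} R_k <= ( sqrt( sum_{k=0}^{l-1} a_k ) + sqrt(2)·b·alpha·l )^2. -/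
/-- Technical induction lemma (non-accelerated case), with constant step size `α`.
Empty sums are zero. -/
theorem technical_lemma_nonaccelerated (alpha : ℝ) (halpha : 0 < alpha) (N : ℕ)
    (a R : ℕ → ℝ) (b : ℝ)
    (ha : ∀ k, 0 ≤ a k) (hb : 0 ≤ b) (hR : ∀ k, 0 ≤ R k)
    (hrec : ∀ l, 1 ≤ l → l ≤ N →
      R l ≤ Real.sqrt 2 * Real.sqrt (∑ k ∈ Finset.range l, a k +
        b * alpha * ∑ k ∈ Finset.Ico 1 l, R k)) :
    ∀ l, 1 ≤ l → l ≤ N →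
      ∑ k ∈ Finset.range l, a k + b * alpha * ∑ k ∈ Finset.Ico 1 l, R k
        ≤ (Real.sqrt (∑ k ∈ Finset.range l, a k) + Real.sqrt 2 * b * alpha * (l : ℝ)) ^ 2 := by
  have hSnn : ∀ l : ℕ, 0 ≤ ∑ k ∈ Finset.range l, a k + b * alpha * ∑ k ∈ Finset.Ico 1 l, R k := by
    intro l
    have h1 : 0 ≤ ∑ k ∈ Finset.range l, a k := Finset.sum_nonneg fun k _ => ha k
    have h2 : 0 ≤ ∑ k ∈ Finset.Ico 1 l, R k := Finset.sum_nonneg fun k _ => hR k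
    positivity
  have hs2 : 0 ≤ Real.sqrt 2 := Real.sqrt_nonneg 2
  intro l
  induction l with
  | zero => intro h; omega
  | succ n ih =>
    intro _ hN
    rcases Nat.eq_zero_or_pos n with rfl | hn
    · -- base case l = 1
      norm_num [Finset.sum_range_succ, Finset.Ico_self]
      have h0 : 0 ≤ a 0 := ha 0
      have hsq : Real.sqrt (a 0) ^ 2 = a 0 := Real.sq_sqrt h0
      have hnn : 0 ≤ Real.sqrt (a 0) := Real.sqrt_nonneg _
      nlinarith [mul_nonneg (mul_nonneg hs2 hb) halpha.le]
    · -- inductive step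
      have ihn := ih hn (le_trans (Nat.le_succ n) hN)
      set An := ∑ k ∈ Finset.range n, a k with hAn
      set Tn := ∑ k ∈ Finset.Ico 1 n, R k with hTn
      have hAnn : 0 ≤ An := Finset.sum_nonneg fun k _ => ha k
      have hSn : 0 ≤ An + b * alpha * Tn := hSnn n
      have hRn := hrec n hn (le_trans (Nat.le_succ n) hN)
      rw [← hAn, ← hTn] at hRn
      have hA1 : ∑ k ∈ Finset.range (n + 1), a k = An + a n := Finset.sum_range_succ a n
      have hT1 : ∑ k ∈ Finset.Ico 1 (n + 1), R k = Tn + R n := by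
        rw [Finset.sum_Ico_succ_top hn]
      clear_value An Tn
      rw [hA1, hT1]
      have hrhsnn : 0 ≤ Real.sqrt An + Real.sqrt 2 * b * alpha * (n : ℝ) := by
        have h1 : 0 ≤ Real.sqrt 2 * b * alpha * (n : ℝ) := by positivity
        linarith [Real.sqrt_nonneg An]
      have hsqrtS : Real.sqrt (An + b * alpha * Tn) ≤
          Real.sqrt An + Real.sqrt 2 * b * alpha * (n : ℝ) := by
        calc Real.sqrt (An + b * alpha * Tn)
            ≤ Real.sqrt ((Real.sqrt An + Real.sqrt 2 * b * alpha * (n : ℝ)) ^ 2) :=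
              Real.sqrt_le_sqrt ihn
          _ = Real.sqrt An + Real.sqrt 2 * b * alpha * (n : ℝ) := by
              rw [Real.sqrt_sq hrhsnn]
      have hRn' : R n ≤ Real.sqrt 2 * (Real.sqrt An + Real.sqrt 2 * b * alpha * (n : ℝ)) :=
        le_trans hRn (mul_le_mul_of_nonneg_left hsqrtS hs2)
      have hAn1 : An ≤ An + a n := by linarith [ha n]
      have hmono : Real.sqrt An ≤ Real.sqrt (An + a n) := Real.sqrt_le_sqrt hAn1
      have hsqA : Real.sqrt (An + a n) ^ 2 = An + a n := Real.sq_sqrt (by linarith [ha n])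
      have hsq2 : Real.sqrt 2 ^ 2 = 2 := Real.sq_sqrt (by norm_num)
      have hnA : 0 ≤ Real.sqrt An := Real.sqrt_nonneg _
      have hnA1 : 0 ≤ Real.sqrt (An + a n) := Real.sqrt_nonneg _
      have hsqAn : Real.sqrt An ^ 2 = An := Real.sq_sqrt hAnn
      push_cast
      have hn1 : (1 : ℝ) ≤ (n : ℝ) := by exact_mod_cast hn
      have hba : 0 ≤ b * alpha := mul_nonneg hb halpha.le
      have hc : 0 ≤ Real.sqrt 2 * b * alpha := mul_nonneg (mul_nonneg hs2 hb) halpha.le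
      -- expand IH quadratic
      have hihn : An + b * alpha * Tn ≤
          An + 2 * (Real.sqrt 2 * b * alpha) * (n : ℝ) * Real.sqrt An
            + 2 * (b * alpha) ^ 2 * (n : ℝ) ^ 2 := by
        have e : (Real.sqrt An + Real.sqrt 2 * b * alpha * (n : ℝ)) ^ 2 =
            Real.sqrt An ^ 2 + 2 * (Real.sqrt 2 * b * alpha) * (n : ℝ) * Real.sqrt An
              + Real.sqrt 2 ^ 2 * (b * alpha) ^ 2 * (n : ℝ) ^ 2 := by ring
        rw [e, hsqAn, hsq2] at ihn
        linarith
      -- bound on b*alpha*R n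
      have h2 : b * alpha * R n ≤ Real.sqrt 2 * b * alpha * Real.sqrt An
          + 2 * (b * alpha) ^ 2 * (n : ℝ) := by
        have h := mul_le_mul_of_nonneg_left hRn' hba
        have e : b * alpha * (Real.sqrt 2 * (Real.sqrt An + Real.sqrt 2 * b * alpha * (n : ℝ))) =
            Real.sqrt 2 * b * alpha * Real.sqrt An
              + Real.sqrt 2 ^ 2 * (b * alpha) ^ 2 * (n : ℝ) := by ring
        rw [e, hsq2] at h
        linarith
      -- sqrt terms comparison
      have h1 : 2 * (Real.sqrt 2 * b * alpha) * (n : ℝ) * Real.sqrt An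
            + (Real.sqrt 2 * b * alpha) * Real.sqrt An
          ≤ 2 * (Real.sqrt 2 * b * alpha) * ((n : ℝ) + 1) * Real.sqrt (An + a n) := by
        linarith [mul_nonneg hc (sub_nonneg.2 hmono),
          mul_nonneg (mul_nonneg hc n.cast_nonneg) (sub_nonneg.2 hmono),
          mul_nonneg hc hnA1]
      -- quadratic coefficient comparison
      have h3 : 2 * (b * alpha) ^ 2 * ((n : ℝ) ^ 2 + (n : ℝ))
          ≤ 2 * (b * alpha) ^ 2 * ((n : ℝ) + 1) ^ 2 := by
        linarith [mul_nonneg (sq_nonneg (b * alpha)) (by positivity : (0:ℝ) ≤ (n : ℝ) + 1)]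
      -- expand the target
      have hexp : (Real.sqrt (An + a n) + Real.sqrt 2 * b * alpha * ((n : ℝ) + 1)) ^ 2 =
          (An + a n) + 2 * (Real.sqrt 2 * b * alpha) * ((n : ℝ) + 1) * Real.sqrt (An + a n)
            + 2 * (b * alpha) ^ 2 * ((n : ℝ) + 1) ^ 2 := by
        have e : (Real.sqrt (An + a n) + Real.sqrt 2 * b * alpha * ((n : ℝ) + 1)) ^ 2 =
            Real.sqrt (An + a n) ^ 2
              + 2 * (Real.sqrt 2 * b * alpha) * ((n : ℝ) + 1) * Real.sqrt (An + a n)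
              + Real.sqrt 2 ^ 2 * (b * alpha) ^ 2 * ((n : ℝ) + 1) ^ 2 := by ring
        rw [e, hsqA, hsq2]
      rw [hexp]
      linarith [h1, h2, h3, hihn]
end
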